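/- Let ξ̄ > 0, let U : [0,ξ̄] → ℝ be absolutely continuous with square-integrable derivative U', let y₀ ∈ ℝ, and define y(ξ) = y₀ + ∫₀^ξ U'(ζ)² dζ. Let μ be the push-forward of Lebesgue measure on [0,ξ̄] under the map y, i.e. μ(J) = Leb{ ξ ∈ [0,ξ̄] : y(ξ) ∈ J } for every Borel set J ⊆ ℝ. Then the absolutely continuous and singular parts of μ with respect to Lebesgue measure are given, for every Borel set A ⊆ ℝ, by μ^a(A) = Leb{ ξ ∈ [0,ξ̄] : y(ξ) ∈ A and U'(ξ) ≠ 0 } and μ^s(A) = Leb{ ξ ∈ [0,ξ̄] : y(ξ) ∈ A and U'(ξ) = 0 }. -/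

import Mathlib

open MeasureTheory Set Real

/-- Lemma 1 of the paper (first part): for `y(ξ) = y₀ + ∫₀^ξ U'(ζ)² dζ` and `μ` the
push-forward of Lebesgue measure on `[0,ξ̄]` under `y`, the absolutely continuous
part of `μ` is the push-forward of Lebesgue measure restricted to `{U' ≠ 0}` and
the singular part is the push-forward of Lebesgue measure restricted to `{U' = 0}`. -/
theorem stmt4 (ξbar : ℝ) (hξbar : 0 < ξbar)
    (U U' : ℝ → ℝ)
    (hU'meas : Measurable U')
    (hU'int : IntegrableOn U' (Set.Icc 0 ξbar))
    (hU'L2 : MemLp U' 2 (volume.restrict (Set.Icc 0 ξbar)))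
    (hU : ∀ ξ ∈ Set.Icc (0:ℝ) ξbar, U ξ = U 0 + ∫ ζ in (0:ℝ)..ξ, U' ζ)
    (y₀ : ℝ) (y : ℝ → ℝ)
    (hy : ∀ ξ : ℝ, y ξ = y₀ + ∫ ζ in (0:ℝ)..ξ, (U' ζ) ^ 2)
    (μ : Measure ℝ)
    (hμ : μ = Measure.map y (volume.restrict (Set.Icc 0 ξbar))) :
    ∀ A : Set ℝ, MeasurableSet A →
      (volume.withDensity (μ.rnDeriv volume)) A =
        volume {ξ : ℝ | ξ ∈ Set.Icc (0:ℝ) ξbar ∧ y ξ ∈ A ∧ U' ξ ≠ 0} ∧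
      μ.singularPart volume A =
        volume {ξ : ℝ | ξ ∈ Set.Icc (0:ℝ) ξbar ∧ y ξ ∈ A ∧ U' ξ = 0} := by
  classical
  have hImeas : MeasurableSet (Set.Icc (0:ℝ) ξbar) := measurableSet_Icc
  set g : ℝ → ℝ := (Set.Icc (0:ℝ) ξbar).indicator (fun ζ => U' ζ ^ 2) with hgdef
  have hgmeas : Measurable g := (hU'meas.pow_const 2).indicator hImeas
  have hgnn : ∀ ξ, 0 ≤ g ξ := fun ξ => Set.indicator_nonneg (fun ζ _ => sq_nonneg _) ξ
  have hsqint : IntegrableOn (fun ζ => U' ζ ^ 2) (Set.Icc (0:ℝ) ξbar) := hU'L2.integrable_sq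
  have hgint : Integrable g := (integrable_indicator_iff hImeas).2 hsqint
  set Y : ℝ → ℝ := fun ξ => y₀ + ∫ ζ in (0:ℝ)..ξ, g ζ with hYdef
  have hagree : ∀ ξ ∈ Set.Icc (0:ℝ) ξbar, y ξ = Y ξ := by
    intro ξ hξ
    rw [hy, hYdef]
    congr 1
    refine intervalIntegral.integral_congr fun ζ hζ => ?_
    have hζ' : ζ ∈ Set.Icc (0:ℝ) ξbar := by
      rw [Set.uIcc_of_le hξ.1] at hζ
      exact ⟨hζ.1, hζ.2.trans hξ.2⟩
    simp [hgdef, Set.indicator_of_mem hζ']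
  have hYsub : ∀ a b : ℝ, Y b - Y a = ∫ ζ in a..b, g ζ := by
    intro a b
    simp only [hYdef, add_sub_add_left_eq_sub]
    exact intervalIntegral.integral_interval_sub_left hgint.intervalIntegrable
      hgint.intervalIntegrable
  have hYmono : Monotone Y := by
    intro a b hab
    have h := hYsub a b
    have h2 : 0 ≤ ∫ ζ in a..b, g ζ := intervalIntegral.integral_nonneg hab fun x _ => hgnn x
    linarith
  have hYcont : Continuous Y :=
    continuous_const.add (intervalIntegral.continuous_primitive
      (fun a b => hgint.intervalIntegrable) 0)
  have hYmeas : Measurable Y := hYcont.measurable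
  set F : StieltjesFunction ℝ := ⟨Y, hYmono, fun x => hYcont.continuousAt.continuousWithinAt⟩
    with hFdef
  have hFmeasure : F.measure = volume.withDensity fun ξ => ENNReal.ofReal (g ξ) := by
    refine Measure.ext_of_Ioc _ _ fun a b hab => ?_
    rw [StieltjesFunction.measure_Ioc, withDensity_apply _ measurableSet_Ioc]
    have h1 : (F b : ℝ) - F a = ∫ ζ in Set.Ioc a b, g ζ := by
      rw [show (F b : ℝ) = Y b from rfl, show (F a : ℝ) = Y a from rfl, hYsub a b,
        intervalIntegral.integral_of_le hab.le]
    rw [h1, ← ofReal_integral_eq_lintegral_ofReal hgint.integrableOn (ae_of_all _ hgnn)]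
  have hderiv : ∀ᵐ ξ, HasDerivAt Y (g ξ) ξ := by
    filter_upwards [F.ae_hasDerivAt,
      Measure.rnDeriv_withDensity volume hgmeas.ennreal_ofReal] with ξ h1 h2
    rw [hFmeasure, h2] at h1
    simpa [ENNReal.toReal_ofReal (hgnn ξ)] using h1
  obtain ⟨N, hsubN, hNmeas, hNnull⟩ :=
    exists_measurable_superset_of_null (ae_iff.1 hderiv)
  have hND : ∀ ξ, ξ ∉ N → HasDerivAt Y (g ξ) ξ := fun ξ h =>
    by_contra fun hc => h (hsubN hc)
  have hmeq : MeasurableSet {ξ : ℝ | U' ξ = 0} := hU'meas (measurableSet_singleton 0)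
  have hmne : MeasurableSet {ξ : ℝ | U' ξ ≠ 0} := hmeq.compl
  set Sne : Set ℝ := Set.Icc 0 ξbar ∩ {ξ | U' ξ ≠ 0} with hSnedef
  set Seq : Set ℝ := Set.Icc 0 ξbar ∩ {ξ | U' ξ = 0} with hSeqdef
  have hSnemeas : MeasurableSet Sne := hImeas.inter hmne
  have hSeqmeas : MeasurableSet Seq := hImeas.inter hmeq
  have hsplit : volume.restrict (Set.Icc (0:ℝ) ξbar)
      = volume.restrict Sne + volume.restrict Seq := by
    have hU : Sne ∪ Seq = Set.Icc (0:ℝ) ξbar := by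
      ext ξ; by_cases h : U' ξ = 0 <;> simp [hSnedef, hSeqdef, h]
    rw [← hU, Measure.restrict_union (Set.disjoint_left.2 fun ξ h1 h2 => h1.2 h2.2) hSeqmeas]
  set μ1 := Measure.map Y (volume.restrict Sne) with hμ1
  set μ2 := Measure.map Y (volume.restrict Seq) with hμ2
  have hae : y =ᵐ[volume.restrict (Set.Icc (0:ℝ) ξbar)] Y :=
    (ae_restrict_iff' hImeas).2 (ae_of_all _ hagree)
  have hμY : μ = μ1 + μ2 := by
    rw [hμ, Measure.map_congr hae, hsplit, Measure.map_add _ _ hYmeas]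
  have hval1 : ∀ B : Set ℝ, MeasurableSet B → μ1 B = volume (Y ⁻¹' B ∩ Sne) := by
    intro B hB
    rw [hμ1, Measure.map_apply_of_aemeasurable hYmeas.aemeasurable hB,
      Measure.restrict_apply' hSnemeas]
  have hval2 : ∀ B : Set ℝ, MeasurableSet B → μ2 B = volume (Y ⁻¹' B ∩ Seq) := by
    intro B hB
    rw [hμ2, Measure.map_apply_of_aemeasurable hYmeas.aemeasurable hB,
      Measure.restrict_apply' hSeqmeas]
  have hpairnull : volume ({0, ξbar} : Set ℝ) = 0 :=
    ((Set.finite_singleton ξbar).insert 0).measure_zero volume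
  -- the absolutely continuous part
  have key : ∀ A : Set ℝ, MeasurableSet A → volume A = 0 →
      volume (Y ⁻¹' A ∩ Sne) = 0 := by
    intro A hA hA0
    set s : Set ℝ := Y ⁻¹' A ∩ Set.Ioo 0 ξbar ∩ {ξ | U' ξ ≠ 0} ∩ Nᶜ with hsdef
    have hsmeas : MeasurableSet s :=
      (((hYmeas hA).inter measurableSet_Ioo).inter hmne).inter hNmeas.compl
    have hgpos : ∀ ξ ∈ s, g ξ ≠ 0 := by
      intro ξ hξ
      have hI' : ξ ∈ Set.Icc (0:ℝ) ξbar := Set.Ioo_subset_Icc_self hξ.1.1.2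
      rw [hgdef]
      simp only [Set.indicator_of_mem hI']
      exact pow_ne_zero 2 hξ.1.2
    have hder : ∀ ξ ∈ s, HasDerivWithinAt Y (g ξ) s ξ := fun ξ hξ =>
      (hND ξ hξ.2).hasDerivWithinAt
    have hinj : InjOn Y s := by
      have hflat : ∀ c d : ℝ, c ∈ s → d ∈ s → c < d → Y c = Y d → False := by
        intro c d hc hd hcd hYe
        have hconst : ∀ t ∈ Set.Icc c d, Y t = Y c := by
          intro t ht
          have h1 : Y c ≤ Y t := hYmono ht.1
          have h2 : Y t ≤ Y d := hYmono ht.2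
          rw [← hYe] at h2
          linarith
        have hud : UniqueDiffWithinAt ℝ (Set.Icc c d) c :=
          (uniqueDiffOn_Icc hcd) c (Set.left_mem_Icc.2 hcd.le)
        have hd1 : HasDerivWithinAt Y (g c) (Set.Icc c d) c :=
          (hND c hc.2).hasDerivWithinAt
        have hd2 : HasDerivWithinAt Y 0 (Set.Icc c d) c :=
          (hasDerivWithinAt_const c (Set.Icc c d) (Y c)).congr hconst
            (hconst c (Set.left_mem_Icc.2 hcd.le))
        have := (hd1.derivWithin hud).symm.trans (hd2.derivWithin hud)
        exact hgpos c hc this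
      intro a ha b hb hab
      by_contra hne
      rcases lt_or_gt_of_ne hne with h | h
      · exact hflat a b ha hb h hab
      · exact hflat b a hb ha h hab.symm
    have hfderiv : ∀ ξ ∈ s,
        HasFDerivWithinAt Y ((1 : ℝ →L[ℝ] ℝ).smulRight (g ξ)) s ξ := fun ξ hξ =>
      (hder ξ hξ).hasFDerivWithinAt
    have himg := lintegral_image_eq_lintegral_abs_det_fderiv_mul volume hsmeas hfderiv hinj
      fun _ => (1 : ENNReal)
    simp only [ContinuousLinearMap.smulRight_one_eq_toSpanSingleton, ContinuousLinearMap.det_toSpanSingleton, mul_one, setLIntegral_one] at himg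
    have himg0 : volume (Y '' s) = 0 := by
      refine measure_mono_null ?_ hA0
      rintro x ⟨ξ, hξ, rfl⟩
      exact hξ.1.1.1
    have hz : ∫⁻ ξ in s, ENNReal.ofReal |g ξ| = 0 := by rw [← himg]; exact himg0
    have hs0 : volume s = 0 := by
      have h0 := (lintegral_eq_zero_iff hgmeas.abs.ennreal_ofReal).1 hz
      have h1 : ∀ᵐ ξ ∂volume.restrict s, ξ ∉ s := by
        filter_upwards [h0] with ξ hξ0 hξs
        have habs : |g ξ| = 0 := le_antisymm
          (by simpa [ENNReal.ofReal_eq_zero] using hξ0) (abs_nonneg _)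
        exact hgpos ξ hξs (abs_eq_zero.1 habs)
      have h2 := ae_iff.1 ((ae_restrict_iff' hsmeas).1 h1)
      have h3 : {ξ : ℝ | ¬(ξ ∈ s → ξ ∉ s)} = s := by
        ext ξ; by_cases h : ξ ∈ s <;> simp [h]
      rwa [h3] at h2
    have hsub : Y ⁻¹' A ∩ Sne ⊆ s ∪ (({0, ξbar} : Set ℝ) ∪ N) := by
      intro ξ hξ
      by_cases hN' : ξ ∈ N
      · exact Or.inr (Or.inr hN')
      by_cases h0 : ξ = 0
      · exact Or.inr (Or.inl (by simp [h0]))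
      by_cases h1 : ξ = ξbar
      · exact Or.inr (Or.inl (by simp [h1]))
      exact Or.inl ⟨⟨⟨hξ.1, lt_of_le_of_ne hξ.2.1.1 (Ne.symm h0),
        lt_of_le_of_ne hξ.2.1.2 h1⟩, hξ.2.2⟩, hN'⟩
    exact measure_mono_null hsub
      (measure_union_null hs0 (measure_union_null hpairnull hNnull))
  have habs : μ1 ≪ volume := by
    refine Measure.AbsolutelyContinuous.mk fun A hA hA0 => ?_
    rw [hval1 A hA]
    exact key A hA hA0
  -- the singular part
  have hsing : μ2 ⟂ₘ volume := by
    set e : Set ℝ := (Set.Ioo 0 ξbar ∩ {ξ | U' ξ = 0}) ∩ Nᶜ with hedef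
    have hg0 : ∀ ξ ∈ e, g ξ = 0 := by
      intro ξ hξ
      have hI' : ξ ∈ Set.Icc (0:ℝ) ξbar := Set.Ioo_subset_Icc_self hξ.1.1
      rw [hgdef]
      simp only [Set.indicator_of_mem hI']
      have h0 : U' ξ = 0 := hξ.1.2
      simp [h0]
    have himg : volume (Y '' e) = 0 := by
      refine addHaar_image_eq_zero_of_det_fderivWithin_eq_zero volume
        (f' := fun ξ => (1 : ℝ →L[ℝ] ℝ).smulRight (g ξ))
        (fun ξ hξ => ((hND ξ hξ.2).hasDerivWithinAt).hasFDerivWithinAt) ?_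
      intro ξ hξ
      rw [ContinuousLinearMap.smulRight_one_eq_toSpanSingleton, ContinuousLinearMap.det_toSpanSingleton]
      exact hg0 ξ hξ
    refine ⟨(toMeasurable volume (Y '' e))ᶜ, (measurableSet_toMeasurable _ _).compl, ?_, ?_⟩
    · rw [hval2 _ (measurableSet_toMeasurable _ _).compl]
      refine measure_mono_null ?_ (measure_union_null hpairnull hNnull)
      intro ξ hξ
      by_cases hN' : ξ ∈ N
      · exact Or.inr hN'
      by_cases h0 : ξ = 0
      · exact Or.inl (by simp [h0])
      by_cases h1 : ξ = ξbar
      · exact Or.inl (by simp [h1])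
      exfalso
      have he' : ξ ∈ e := ⟨⟨⟨lt_of_le_of_ne hξ.2.1.1 (Ne.symm h0),
        lt_of_le_of_ne hξ.2.1.2 h1⟩, hξ.2.2⟩, hN'⟩
      exact hξ.1 (subset_toMeasurable _ _ ⟨ξ, he', rfl⟩)
    · rw [compl_compl, measure_toMeasurable]
      exact himg
  -- uniqueness of the Lebesgue decomposition
  haveI hfin1 : IsFiniteMeasure μ1 := by
    constructor
    rw [hval1 Set.univ MeasurableSet.univ]
    refine lt_of_le_of_lt (measure_mono fun ξ h => h.2.1) ?_
    exact measure_Icc_lt_top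
  have hwd : volume.withDensity (μ1.rnDeriv volume) = μ1 :=
    Measure.withDensity_rnDeriv_eq μ1 volume habs
  have hadd : μ = μ2 + volume.withDensity (μ1.rnDeriv volume) := by
    rw [hwd, hμY, add_comm]
  have hsp : μ.singularPart volume = μ2 :=
    (Measure.eq_singularPart (Measure.measurable_rnDeriv _ _) hsing hadd).symm
  have hac : volume.withDensity (μ.rnDeriv volume) = μ1 := by
    rw [← Measure.eq_withDensity_rnDeriv (Measure.measurable_rnDeriv _ _) hsing hadd]
    exact hwd
  intro A hA
  constructor
  · rw [hac, hval1 A hA]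
    congr 1
    ext ξ
    simp only [hSnedef, Set.mem_inter_iff, Set.mem_preimage, Set.mem_setOf_eq]
    constructor
    · rintro ⟨hYA, hI', hne⟩
      exact ⟨hI', by rwa [hagree ξ hI'], hne⟩
    · rintro ⟨hI', hyA, hne⟩
      exact ⟨by rwa [← hagree ξ hI'], hI', hne⟩
  · rw [hsp, hval2 A hA]
    congr 1
    ext ξ
    simp only [hSeqdef, Set.mem_inter_iff, Set.mem_preimage, Set.mem_setOf_eq]
    constructor
    · rintro ⟨hYA, hI', hne⟩
      exact ⟨hI', by rwa [hagree ξ hI'], hne⟩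
    · rintro ⟨hI', hyA, hne⟩
      exact ⟨by rwa [← hagree ξ hI'], hI', hne⟩
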